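/- arXiv:2306.03884 — 2 statements merged into one kernel-verified Lean document; each statement's English description precedes it below -/
import Mathlib

section
/- For m ≥ n ≥ 3, the graph G_{n,m} with terminals s and t satisfies N_{m-1}(G_{n,m},s,t) = n-2 and N_{n-2}(G_{n,m},s,t) = 1 + (n-2)(m-n+2). -/
/-- A finite loopless multigraph: a finite vertex type `V`, a finite edge type `E`,
and an endpoint map assigning to each edge an unordered pair of distinct vertices. -/
structure Multigraph where
  V : Type
  E : Type
  [fintV : Fintype V]
  [fintE : Fintype E]
  [decV : DecidableEq V]
  [decE : DecidableEq E]
  ends : E → Sym2 V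
  loopless : ∀ e, ¬ (ends e).IsDiag

attribute [instance] Multigraph.fintV Multigraph.fintE Multigraph.decV Multigraph.decE

namespace Multigraph

/-- The simple graph on `G.V` underlying the spanning subgraph of `G` with edge set `E'`. -/
def subgraph (G : Multigraph) (E' : Finset G.E) : SimpleGraph G.V where
  Adj u v := u ≠ v ∧ ∃ e ∈ E', G.ends e = s(u, v)
  symm := by
    constructor
    rintro u v ⟨huv, e, he, hends⟩
    exact ⟨huv.symm, e, he, hends.trans (Sym2.eq_swap)⟩
  loopless := by constructor; rintro u ⟨h, -⟩; exact h rfl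

/-- The spanning subgraph of `G` with edge set `E'` has exactly two connected components,
one containing `s` and the other containing `t`. -/
def SplitState (G : Multigraph) (s t : G.V) (E' : Finset G.E) : Prop :=
  ¬ (G.subgraph E').Reachable s t ∧
    ∀ v : G.V, (G.subgraph E').Reachable v s ∨ (G.subgraph E').Reachable v t

open scoped Classical in
/-- The split reliability of `G` with terminals `s` and `t`, at edge probability `p`. -/
noncomputable def sRel (G : Multigraph) (s t : G.V) (p : ℝ) : ℝ :=
  ∑ E' : Finset G.E, if G.SplitState s t E' then
    p ^ E'.card * (1 - p) ^ (Fintype.card G.E - E'.card) else 0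

open scoped Classical in
/-- `N_i(G,s,t)`: the number of edge subsets of cardinality `i` whose spanning subgraph has
exactly two connected components, one containing `s` and the other containing `t`. -/
noncomputable def Nst (G : Multigraph) (s t : G.V) (i : ℕ) : ℕ :=
  (Finset.univ.filter fun E' : Finset G.E => E'.card = i ∧ G.SplitState s t E').card

/-- A multigraph is connected when its underlying simple graph is. -/
def Connected (G : Multigraph) : Prop := (G.subgraph Finset.univ).Connected

open scoped Classical in
/-- The all-terminal reliability of `G` at edge probability `p`. -/
noncomputable def Rel (G : Multigraph) (p : ℝ) : ℝ :=
  ∑ E' : Finset G.E, if (G.subgraph E').Connected then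
    p ^ E'.card * (1 - p) ^ (Fintype.card G.E - E'.card) else 0

/-- `G` together with terminals `s ≠ t` is an optimal `(n,m)`-graph for split reliability. -/
def IsOptimal (n m : ℕ) (G : Multigraph) (s t : G.V) : Prop :=
  G.Connected ∧ Fintype.card G.V = n ∧ Fintype.card G.E = m ∧ s ≠ t ∧
    ∀ (H : Multigraph) (s' t' : H.V), H.Connected → Fintype.card H.V = n →
      Fintype.card H.E = m → s' ≠ t' → ∀ p : ℝ, 0 < p → p < 1 →
        H.sRel s' t' p ≤ G.sRel s t p

/-- An isomorphism of multigraphs taking terminals `s,t` of `G` to terminals `u,v` of `H`. -/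
def IsoTerm (G H : Multigraph) (s t : G.V) (u v : H.V) : Prop :=
  ∃ (φ : G.V ≃ H.V) (ψ : G.E ≃ H.E),
    (∀ e, H.ends (ψ e) = (G.ends e).map φ) ∧ φ s = u ∧ φ t = v

end Multigraph

namespace Multigraph

/-- `Gnm n m k`: the multigraph obtained from a path `v_0, v_1, …, v_{n-1}` (terminals
`s = v_0`, `t = v_{n-1}`) by replacing the path edge from `v_k` to `v_{k+1}` by a bundle of
`m - n + 2` parallel edges (so that the graph has `m` edges in total when `m ≥ n - 1`). -/
def Gnm (n m k : ℕ) (hk : k < n - 1) : Multigraph where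
  V := Fin n
  E := Fin m
  ends e :=
    if h : e.val < n - 1 then
      s((⟨e.val, by omega⟩ : Fin n), (⟨e.val + 1, by omega⟩ : Fin n))
    else
      s((⟨k, by omega⟩ : Fin n), (⟨k + 1, by omega⟩ : Fin n))
  loopless e := by
    by_cases h : e.val < n - 1 <;>
      simp [h, Sym2.mk_isDiag_iff, Fin.ext_iff]

/-- The cycle on `n ≥ 2` vertices. -/
def cycleGraph (n : ℕ) (hn : 2 ≤ n) : Multigraph where
  V := Fin n
  E := Fin n
  ends e := s(e, (⟨(e.val + 1) % n, Nat.mod_lt _ (by omega)⟩ : Fin n))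
  loopless e := by
    simp only [Sym2.mk_isDiag_iff, Fin.ext_iff, Fin.val_mk]
    intro hc
    rcases Nat.lt_or_ge (e.val + 1) n with h' | h'
    · rw [Nat.mod_eq_of_lt h'] at hc; omega
    · have he : e.val + 1 = n := by have := e.isLt; omega
      rw [he, Nat.mod_self] at hc
      omega

/-- The multigraph obtained from `G` by adjoining a new vertex (`none`) joined by a single
new edge to the vertex `u` of `G`. -/
def addPendant (G : Multigraph) (u : G.V) : Multigraph where
  V := Option G.V
  E := Option G.E
  ends e := e.elim s(some u, none) (fun e' => (G.ends e').map some)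
  loopless e := by
    cases e with
    | none => simp [Sym2.mk_isDiag_iff]
    | some e' =>
        show ¬ ((G.ends e').map some).IsDiag
        rw [Sym2.isDiag_map (Option.some_injective _)]
        exact G.loopless e'

/-- The disjoint union of two multigraphs. -/
def disjSum (A B : Multigraph) : Multigraph where
  V := A.V ⊕ B.V
  E := A.E ⊕ B.E
  ends := Sum.elim (fun e => (A.ends e).map Sum.inl) (fun e => (B.ends e).map Sum.inr)
  loopless e := by
    cases e with
    | inl e =>
        show ¬ ((A.ends e).map Sum.inl).IsDiag
        rw [Sym2.isDiag_map Sum.inl_injective]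
        exact A.loopless e
    | inr e =>
        show ¬ ((B.ends e).map Sum.inr).IsDiag
        rw [Sym2.isDiag_map Sum.inr_injective]
        exact B.loopless e

/-- The multigraph on three vertices `0, 1, 2` with a bundle of `a` parallel edges between
`0` and `1` and a bundle of `b` parallel edges between `1` and `2`. -/
def doubleBundle (a b : ℕ) : Multigraph where
  V := Fin 3
  E := Fin (a + b)
  ends e := if e.val < a then s((0 : Fin 3), (1 : Fin 3)) else s((1 : Fin 3), (2 : Fin 3))
  loopless e := by
    by_cases h : e.val < a <;> simp [h, Sym2.mk_isDiag_iff]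

/-- The multigraph on three vertices `0, 1, 2` with bundles of `a`, `b`, `c` parallel edges
between `0,1`, between `1,2`, and between `2,0` respectively. -/
def tripleBundle (a b c : ℕ) : Multigraph where
  V := Fin 3
  E := Fin (a + b + c)
  ends e :=
    if e.val < a then s((0 : Fin 3), (1 : Fin 3))
    else if e.val < a + b then s((1 : Fin 3), (2 : Fin 3))
    else s((2 : Fin 3), (0 : Fin 3))
  loopless e := by
    by_cases h : e.val < a
    · simp [h, Sym2.mk_isDiag_iff]
    · by_cases h' : e.val < a + b <;> simp [h, h', Sym2.mk_isDiag_iff]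

/-- The multigraph obtained from a path `v_0, …, v_{n-1}` by replacing the path edge at
position `k₁` by a bundle of `2` parallel edges and the path edge at position `k₂` by a
bundle of `m - n + 1` parallel edges (for `m ≥ n`, `k₁ ≠ k₂`, the graph has `m` edges). -/
def Gnm2 (n m k₁ k₂ : ℕ) (hk₁ : k₁ < n - 1) (hk₂ : k₂ < n - 1) : Multigraph where
  V := Fin n
  E := Fin m
  ends e :=
    if h : e.val < n - 1 then
      s((⟨e.val, by omega⟩ : Fin n), (⟨e.val + 1, by omega⟩ : Fin n))
    else if e.val = n - 1 then
      s((⟨k₁, by omega⟩ : Fin n), (⟨k₁ + 1, by omega⟩ : Fin n))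
    else
      s((⟨k₂, by omega⟩ : Fin n), (⟨k₂ + 1, by omega⟩ : Fin n))
  loopless e := by
    by_cases h : e.val < n - 1
    · simp [h, Sym2.mk_isDiag_iff, Fin.ext_iff]
    · by_cases h' : e.val = n - 1 <;> simp [h, h', Sym2.mk_isDiag_iff, Fin.ext_iff]

/-- The simple graph on `n ≥ 4` vertices consisting of a path `s = v_0, …, v_{n-3} = t` of
length `n - 3` together with two further vertices `v_{n-2}, v_{n-1}` forming a triangle
with `t`. It has `n` vertices and `n` edges. -/
def triGraph (n : ℕ) (hn : 4 ≤ n) : Multigraph where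
  V := Fin n
  E := Fin n
  ends e :=
    if h : e.val < n - 3 then
      s((⟨e.val, by omega⟩ : Fin n), (⟨e.val + 1, by omega⟩ : Fin n))
    else if e.val = n - 3 then
      s((⟨n - 3, by omega⟩ : Fin n), (⟨n - 2, by omega⟩ : Fin n))
    else if e.val = n - 2 then
      s((⟨n - 2, by omega⟩ : Fin n), (⟨n - 1, by omega⟩ : Fin n))
    else
      s((⟨n - 1, by omega⟩ : Fin n), (⟨n - 3, by omega⟩ : Fin n))
  loopless e := by
    by_cases h : e.val < n - 3
    · simp [h, Sym2.mk_isDiag_iff, Fin.ext_iff]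
    · by_cases h' : e.val = n - 3
      · simp only [dif_neg h, if_pos h', Sym2.mk_isDiag_iff, Fin.mk.injEq]; omega
      · by_cases h'' : e.val = n - 2
        · simp only [dif_neg h, if_neg h', if_pos h'', Sym2.mk_isDiag_iff, Fin.mk.injEq]; omega
        · simp only [dif_neg h, if_neg h', if_neg h'', Sym2.mk_isDiag_iff, Fin.mk.injEq]; omega

end Multigraph

/-!
Edge `e` of `G_{n,m}` runs along the path edge `{v_i, v_{i+1}}` with `i = pathPos e`, so the
spanning subgraph with edge set `X` is the path `v_0, …, v_{n-1}` keeping the edges at the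
positions `pathPos '' X`. It has exactly two components, one containing `s` and the other `t`,
iff exactly one of the `n - 1` positions is missed, i.e. iff `a + [b > 0] = n - 2`, where `a` and
`b` count the single and the bundle edges in `X`. The number of edge sets with given `(a, b)` is
`C(n-2, a) C(m-n+2, b)`. With `m - 1` edges only `(a, b) = (n - 3, m - n + 2)` qualifies; with
`n - 2` edges, `(n - 2, 0)` and `(n - 3, 1)`.
-/

namespace SimpleGraph

def pathGraphOn (n : ℕ) (P : Set ℕ) : SimpleGraph (Fin n) :=
  fromRel fun u v => u.val + 1 = v.val ∧ u.val ∈ P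

variable {n : ℕ} {P : Set ℕ}

theorem pathGraphOn_adj {u v : Fin n} :
    (pathGraphOn n P).Adj u v ↔
      (u.val + 1 = v.val ∧ u.val ∈ P) ∨ (v.val + 1 = u.val ∧ v.val ∈ P) := by
  rw [pathGraphOn, fromRel_adj, and_iff_right_iff_imp]
  rintro (⟨h, -⟩ | ⟨h, -⟩) rfl <;> omega

theorem pathGraphOn_reachable_of_forall_mem {u v : Fin n} (huv : u ≤ v)
    (h : ∀ p, u.val ≤ p → p < v.val → p ∈ P) : (pathGraphOn n P).Reachable u v := by
  obtain ⟨d, hd⟩ := Nat.exists_eq_add_of_le (Fin.le_iff_val_le_val.1 huv)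
  induction d generalizing v with
  | zero => exact (Fin.ext (by omega) : u = v) ▸ .refl u
  | succ d ih =>
    let w : Fin n := ⟨u.val + d, by omega⟩
    have huw : (pathGraphOn n P).Reachable u w :=
      ih (Fin.le_iff_val_le_val.2 (Nat.le_add_right _ _))
        (fun p hp (hpw : p < u.val + d) => h p hp (by omega)) rfl
    have hwv : (pathGraphOn n P).Adj w v :=
      pathGraphOn_adj.2 (.inl ⟨show u.val + d + 1 = v.val by omega,
        h _ (Nat.le_add_right _ _) (show u.val + d < v.val by omega)⟩)
    exact huw.trans hwv.reachable

theorem le_iff_le_of_pathGraphOn_reachable {j : ℕ} (hj : j ∉ P) {u v : Fin n}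
    (h : (pathGraphOn n P).Reachable u v) : u.val ≤ j ↔ v.val ≤ j := by
  obtain ⟨w⟩ := h
  induction w with
  | nil => rfl
  | cons hadj _ ih =>
    rw [← ih]
    rcases pathGraphOn_adj.1 hadj with ⟨h, hp⟩ | ⟨h, hp⟩ <;>
      · have : _ ≠ j := fun h => hj (h ▸ hp)
        omega

theorem pathGraphOn_splits_iff (hn : 0 < n) :
    (¬ (pathGraphOn n P).Reachable ⟨0, hn⟩ ⟨n - 1, by omega⟩ ∧
      ∀ v, (pathGraphOn n P).Reachable v ⟨0, hn⟩ ∨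
        (pathGraphOn n P).Reachable v ⟨n - 1, by omega⟩) ↔
      ∃! j, j < n - 1 ∧ j ∉ P := by
  constructor
  · rintro ⟨hst, hv⟩
    obtain ⟨j, hj, hjP⟩ : ∃ j, j < n - 1 ∧ j ∉ P := by
      by_contra! h
      exact hst (pathGraphOn_reachable_of_forall_mem (Fin.le_iff_val_le_val.2 (Nat.zero_le _))
        fun p _ hp => h p hp)
    refine ⟨j, ⟨hj, hjP⟩, fun i ⟨hi, hiP⟩ => ?_⟩
    -- Between two missing edges `a < b`, the vertex `a + 1` reaches neither end.
    have two_gaps : ∀ a b, a < b → b < n - 1 → a ∉ P → b ∉ P → False :=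
      fun a b hab hb ha hbP => by
        rcases hv ⟨a + 1, by omega⟩ with h | h
        · have : a + 1 ≤ a ↔ 0 ≤ a := le_iff_le_of_pathGraphOn_reachable ha h; omega
        · have : a + 1 ≤ b ↔ n - 1 ≤ b := le_iff_le_of_pathGraphOn_reachable hbP h; omega
    rcases lt_trichotomy i j with h | h | h
    · exact (two_gaps i j h hj hiP hjP).elim
    · exact h
    · exact (two_gaps j i h hi hjP hiP).elim
  · rintro ⟨j, ⟨hj, hjP⟩, huniq⟩
    have hmem : ∀ p, p < n - 1 → p ≠ j → p ∈ P := fun p hp hpj => by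
      by_contra hpP
      exact hpj (huniq p ⟨hp, hpP⟩)
    refine ⟨fun h => ?_, fun v => ?_⟩
    · have : 0 ≤ j ↔ n - 1 ≤ j := le_iff_le_of_pathGraphOn_reachable hjP h; omega
    · rcases le_or_gt v.val j with hvj | hvj
      · exact .inl (pathGraphOn_reachable_of_forall_mem (Fin.le_iff_val_le_val.2 (Nat.zero_le _))
          fun p _ hp => hmem p (by omega) (by omega)).symm
      · refine .inr (pathGraphOn_reachable_of_forall_mem
          (Fin.le_iff_val_le_val.2 (show v.val ≤ n - 1 by omega)) fun p hp hp' => ?_)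
        exact hmem p (show p < n - 1 from hp') (by omega)

end SimpleGraph

namespace Finset

variable {α : Type*} [Fintype α] [DecidableEq α]

theorem card_filter_card_inter_card_sdiff (S : Finset α) (a b : ℕ) :
    #{X : Finset α | #(X ∩ S) = a ∧ #(X \ S) = b} = (#S).choose a * (#Sᶜ).choose b := by
  have split_union {Y Z : Finset α} (hY : Y ⊆ S) (hZ : Z ⊆ Sᶜ) :
      (Y ∪ Z) ∩ S = Y ∧ (Y ∪ Z) \ S = Z := by
    have hZS : Disjoint Z S := (subset_compl_iff_disjoint_right).1 hZ
    rw [union_inter_distrib_right, inter_eq_left.2 hY, disjoint_iff_inter_eq_empty.1 hZS,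
      union_sdiff_distrib, sdiff_eq_empty_iff_subset.2 hY, hZS.sdiff_eq_left]
    simp
  rw [← card_powersetCard, ← card_powersetCard, ← card_product]
  refine card_nbij' (fun X => (X ∩ S, X \ S)) (fun YZ => YZ.1 ∪ YZ.2) ?_ ?_ ?_ ?_
  · intro X hX
    simp only [coe_filter, mem_univ, true_and, Set.mem_ofPred_eq] at hX
    simp only [coe_product, Set.mem_prod, mem_coe, mem_powersetCard]
    exact ⟨⟨inter_subset_right, hX.1⟩, ⟨fun x hx => by simp_all, hX.2⟩⟩
  · rintro ⟨Y, Z⟩ hYZ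
    simp only [coe_product, Set.mem_prod, mem_coe, mem_powersetCard] at hYZ
    obtain ⟨⟨hY, rfl⟩, ⟨hZ, rfl⟩⟩ := hYZ
    simp [split_union hY hZ]
  · intro X _
    exact sup_inf_sdiff X S
  · rintro ⟨Y, Z⟩ hYZ
    simp only [coe_product, Set.mem_prod, mem_coe, mem_powersetCard] at hYZ
    simp [split_union hYZ.1.1 hYZ.2.1]

theorem existsUnique_lt_notMem_iff {T : Finset ℕ} {N : ℕ} (hT : T ⊆ range N) :
    (∃! j, j < N ∧ j ∉ T) ↔ #T + 1 = N := by
  have hcard : (∃! j, j < N ∧ j ∉ T) ↔ #(range N \ T) = 1 := by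
    simp only [card_eq_one, eq_singleton_iff_unique_mem, mem_sdiff, mem_range, ExistsUnique]
  have hle := card_le_card hT
  rw [card_range] at hle
  rw [hcard, card_sdiff_of_subset hT, card_range]
  omega

end Finset

namespace Multigraph.Gnm

open Finset

variable {n m k : ℕ}

def pathPos (n k : ℕ) {m : ℕ} (e : Fin m) : ℕ := if e.val < n - 1 then e.val else k

def singleEdges (n k m : ℕ) : Finset (Fin m) := {e | e.val < n - 1 ∧ e.val ≠ k}

theorem pathPos_lt (hk : k < n - 1) (e : Fin m) : pathPos n k e < n - 1 := by
  unfold pathPos; split_ifs <;> omega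

theorem ends_eq_iff (hk : k < n - 1) (e : Fin m) (u v : Fin n) :
    (Gnm n m k hk).ends e = s(u, v) ↔
      (u.val = pathPos n k e ∧ v.val = pathPos n k e + 1) ∨
        (v.val = pathPos n k e ∧ u.val = pathPos n k e + 1) := by
  have hlt := pathPos_lt hk e
  have hends : (Gnm n m k hk).ends e =
      s((⟨pathPos n k e, by omega⟩ : Fin n), ⟨pathPos n k e + 1, by omega⟩) := by
    simp only [Gnm, pathPos]; split_ifs <;> rfl
  have hmk :
      s((⟨pathPos n k e, by omega⟩ : Fin n), ⟨pathPos n k e + 1, by omega⟩) = s(u, v) ↔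
      (u.val = pathPos n k e ∧ v.val = pathPos n k e + 1) ∨
        (v.val = pathPos n k e ∧ u.val = pathPos n k e + 1) := by
    rw [Sym2.eq_iff]; simp only [Fin.ext_iff]; omega
  rw [hends]
  exact hmk

theorem subgraph_adj_iff (hk : k < n - 1) (E' : Finset (Fin m)) (u v : Fin n) :
    ((Gnm n m k hk).subgraph E').Adj u v ↔
      (SimpleGraph.pathGraphOn n ↑(E'.image (pathPos n k))).Adj u v := by
  change (u ≠ v ∧ ∃ e ∈ E', (Gnm n m k hk).ends e = s(u, v)) ↔ _
  rw [SimpleGraph.pathGraphOn_adj]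
  refine (and_congr_right fun _ => exists_congr fun e =>
    and_congr_right fun _ => ends_eq_iff hk e u v).trans ?_
  simp only [coe_image, Set.mem_image, mem_coe]
  constructor
  · rintro ⟨-, e, he, ⟨hu, hv⟩ | ⟨hv, hu⟩⟩
    · exact .inl ⟨by omega, e, he, hu.symm⟩
    · exact .inr ⟨by omega, e, he, hv.symm⟩
  · rintro (⟨huv, e, he, hu⟩ | ⟨hvu, e, he, hv⟩)
    · exact ⟨fun h => by subst h; omega, e, he, .inl ⟨hu.symm, by omega⟩⟩
    · exact ⟨fun h => by subst h; omega, e, he, .inr ⟨hv.symm, by omega⟩⟩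

theorem subgraph_eq (hk : k < n - 1) (E' : Finset (Fin m)) :
    (Gnm n m k hk).subgraph E' = SimpleGraph.pathGraphOn n ↑(E'.image (pathPos n k)) :=
  SimpleGraph.ext (funext₂ fun u v => propext (subgraph_adj_iff hk E' u v))

theorem splitState_iff (hk : k < n - 1) (E' : Finset (Fin m)) :
    (Gnm n m k hk).SplitState ⟨0, by omega⟩ ⟨n - 1, by omega⟩ E' ↔
      #(E'.image (pathPos n k)) = n - 2 := by
  have hsub : E'.image (pathPos n k) ⊆ range (n - 1) := fun p hp => by
    obtain ⟨e, -, rfl⟩ := mem_image.1 hp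
    exact mem_range.2 (pathPos_lt hk e)
  unfold SplitState
  rw [subgraph_eq]
  exact (SimpleGraph.pathGraphOn_splits_iff (by omega)).trans
    ((existsUnique_lt_notMem_iff hsub).trans (by omega))

theorem card_singleEdges (hk : k < n - 1) (hm : n - 1 ≤ m) :
    #(singleEdges n k m) = n - 2 := by
  have : singleEdges n k m = ({e | e.val < n - 1} : Finset (Fin m)).erase ⟨k, by omega⟩ := by
    ext e
    simp [singleEdges, Fin.ext_iff, and_comm]
  rw [this, card_erase_of_mem (by simpa using hk), Fin.card_filter_val_lt]
  omega

theorem card_compl_singleEdges (hk : k < n - 1) (hm : n ≤ m) :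
    #(singleEdges n k m)ᶜ = m - n + 2 := by
  rw [card_compl, Fintype.card_fin, card_singleEdges hk (by omega : n - 1 ≤ m)]
  omega

theorem card_image_pathPos (E' : Finset (Fin m)) :
    #(E'.image (pathPos n k)) =
      #(E' ∩ singleEdges n k m) + if (E' \ singleEdges n k m).Nonempty then 1 else 0 := by
  set S := singleEdges n k m
  have pathPos_of_mem : ∀ e ∈ S, pathPos n k e = e.val := fun e he => by
    simp only [S, singleEdges, mem_filter, mem_univ, true_and] at he
    simp [pathPos, he.1]
  have pathPos_of_notMem : ∀ e ∉ S, pathPos n k e = k := fun e he => by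
    simp only [S, singleEdges, mem_filter, mem_univ, true_and, not_and, not_not] at he
    unfold pathPos; split_ifs with h
    · exact he h
    · rfl
  have hsingle : #((E' ∩ S).image (pathPos n k)) = #(E' ∩ S) :=
    card_image_of_injOn fun e he e' he' h => by
      simp only [coe_inter, Set.mem_inter_iff, mem_coe] at he he'
      rw [pathPos_of_mem e he.2, pathPos_of_mem e' he'.2] at h
      exact Fin.ext h
  have hbundle : (E' \ S).image (pathPos n k) = if (E' \ S).Nonempty then {k} else ∅ := by
    split_ifs with h
    · rw [image_congr fun e he => pathPos_of_notMem e (mem_sdiff.1 he).2, image_const h]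
    · simp [not_nonempty_iff_eq_empty.1 h]
  have hdisj : Disjoint ((E' ∩ S).image (pathPos n k)) ((E' \ S).image (pathPos n k)) := by
    rw [hbundle]
    split_ifs
    · simp only [disjoint_singleton_right, mem_image, not_exists, not_and]
      intro e he hek
      rw [pathPos_of_mem e (mem_inter.1 he).2] at hek
      simp [S, singleEdges, hek] at he
    · exact disjoint_empty_right _
  conv_lhs => rw [← sup_inf_sdiff E' S, inf_eq_inter, sup_eq_union]
  rw [image_union, card_union_of_disjoint hdisj, hsingle, hbundle]
  split_ifs <;> simp

theorem Nst_eq_card_filter (hk : k < n - 1) (hm : n ≤ m) (i : ℕ) (p : ℕ → ℕ → Prop)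
    [DecidableRel p] (hp : ∀ a b, a ≤ n - 2 → b ≤ m - n + 2 →
      (a + b = i ∧ a + (if 0 < b then 1 else 0) = n - 2 ↔ p a b)) :
    (Gnm n m k hk).Nst ⟨0, by omega⟩ ⟨n - 1, by omega⟩ i =
      #{X : Finset (Fin m) | p #(X ∩ singleEdges n k m) #(X \ singleEdges n k m)} := by
  classical
  change #{X : Finset (Fin m) |
    #X = i ∧ (Gnm n m k hk).SplitState ⟨0, by omega⟩ ⟨n - 1, by omega⟩ X} = _
  congr 1
  ext X
  simp only [mem_filter, mem_univ, true_and]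
  rw [splitState_iff, card_image_pathPos, ← card_inter_add_card_sdiff X (singleEdges n k m)]
  simp only [← card_pos]
  refine hp _ _ ?_ ?_
  · rw [← card_singleEdges hk (by omega : n - 1 ≤ m)]
    exact card_le_card inter_subset_right
  · rw [← card_compl_singleEdges hk hm]
    exact card_le_card fun e he => mem_compl.2 (mem_sdiff.1 he).2

theorem Nst_m_sub_one (hn : 3 ≤ n) (hm : n ≤ m) (hk : k < n - 1) :
    (Gnm n m k hk).Nst ⟨0, by omega⟩ ⟨n - 1, by omega⟩ (m - 1) = n - 2 := by
  rw [Nst_eq_card_filter hk hm (m - 1) (fun a b => a = n - 3 ∧ b = m - n + 2)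
      (fun a b ha hb => by split_ifs <;> omega),
    card_filter_card_inter_card_sdiff, card_singleEdges hk (by omega : n - 1 ≤ m),
    card_compl_singleEdges hk hm, Nat.choose_self, show n - 3 = n - 2 - 1 by omega,
    Nat.choose_symm (by omega), Nat.choose_one_right, mul_one]

theorem Nst_n_sub_two (hn : 3 ≤ n) (hm : n ≤ m) (hk : k < n - 1) :
    (Gnm n m k hk).Nst ⟨0, by omega⟩ ⟨n - 1, by omega⟩ (n - 2) =
      1 + (n - 2) * (m - n + 2) := by
  rw [Nst_eq_card_filter hk hm (n - 2)
      (fun a b => (a = n - 2 ∧ b = 0) ∨ (a = n - 3 ∧ b = 1))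
      (fun a b ha hb => by split_ifs <;> omega),
    filter_or, card_union_of_disjoint (disjoint_filter.2 fun _ _ h h' => by omega),
    card_filter_card_inter_card_sdiff, card_filter_card_inter_card_sdiff,
    card_singleEdges hk (by omega : n - 1 ≤ m), card_compl_singleEdges hk hm, Nat.choose_self,
    Nat.choose_zero_right, show n - 3 = n - 2 - 1 by omega, Nat.choose_symm (by omega),
    Nat.choose_one_right, Nat.choose_one_right]

end Multigraph.Gnm

/-- For `m ≥ n ≥ 3`, the graph `G_{n,m}` with terminals `s` and `t`
satisfies `N_{m-1}(G_{n,m},s,t) = n-2` and `N_{n-2}(G_{n,m},s,t) = 1+(n-2)(m-n+2)`. -/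
theorem Nst_Gnm (n m : ℕ) (hn : 3 ≤ n) (hm : n ≤ m) (k : ℕ) (hk : k < n - 1) :
    (Multigraph.Gnm n m k hk).Nst (⟨0, by omega⟩ : Fin n) (⟨n - 1, by omega⟩ : Fin n)
        (m - 1) = n - 2 ∧
    (Multigraph.Gnm n m k hk).Nst (⟨0, by omega⟩ : Fin n) (⟨n - 1, by omega⟩ : Fin n)
        (n - 2) = 1 + (n - 2) * (m - n + 2) :=
  ⟨Multigraph.Gnm.Nst_m_sub_one hn hm hk, Multigraph.Gnm.Nst_n_sub_two hn hm hk⟩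
end

section
/- Let m ≥ 3 and a,b ≥ 1 with a+b ≤ m-1, and let D be the multigraph on vertices s, t, v consisting of a bundle of a parallel edges between s and t, a bundle of b parallel edges between t and v, and a bundle of m-a-b parallel edges between v and s, with terminals s and t. Then for all p ∈ [0,1], sRel(D,s,t;p) = (1-p)^a[(1-p)^b + (1-p)^{m-a-b} - 2(1-p)^{m-a}], and for all p ∈ (0,1), sRel(D,s,t;p) < (1-p) + (1-p)^{m-1} - 2(1-p)^m = sRel(G_{3,m},s,t;p). -/
/-!
On three vertices `s, t, v`, a spanning subgraph separates `s` from `t` into exactly two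
components precisely when its edge set is a nonempty set of `s`–`v` edges or a nonempty set of
`t`–`v` edges. Summing the weights of these two families gives, with `q = 1 - p` and `m` edges,
`sRel = (q ^ (m - #sv) - q ^ m) + (q ^ (m - #tv) - q ^ m)`. For `D` this is
`q^(a+b) + q^(a+c) - 2 q^m` (`c = m - a - b`), for `G_{3,m}` it is `q + q^(m-1) - 2 q^m`, and the
comparison follows from `(1 - q^b) (1 - q^(a+c-2)) ≥ 0` after lowering two exponents by one.
-/

open Finset

theorem SimpleGraph.IsIsolated.eq_of_reachable {V : Type*} {H : SimpleGraph V} {u v : V}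
    (hu : H.IsIsolated u) (huv : H.Reachable u v) : u = v := by
  obtain ⟨_ | ⟨hadj, _⟩⟩ := huv
  · rfl
  · exact absurd hadj (hu _)

theorem Fin.card_filter_le_val_lt {n l r : ℕ} (hr : r ≤ n) :
    #{i : Fin n | l ≤ i.val ∧ i.val < r} = r - l := by
  rw [← Nat.card_Ico, ← card_image_of_injective _ Fin.val_injective]
  congr 1
  ext x
  simp only [mem_image, mem_filter, mem_univ, true_and, mem_Ico]
  exact ⟨by rintro ⟨i, hi, rfl⟩; exact hi, fun hx => ⟨⟨x, by omega⟩, hx, rfl⟩⟩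

theorem Finset.sum_powerset_erase_empty_pow_mul_one_sub_pow {ι : Type*} [DecidableEq ι]
    (S : Finset ι) {n : ℕ} (hS : #S ≤ n) (p : ℝ) :
    ∑ T ∈ S.powerset.erase ∅, p ^ #T * (1 - p) ^ (n - #T) =
      (1 - p) ^ (n - #S) - (1 - p) ^ n := by
  have hfactor : ∀ T ∈ S.powerset, p ^ #T * (1 - p) ^ (n - #T) =
      (1 - p) ^ (n - #S) * (p ^ #T * (1 - p) ^ (#S - #T)) := by
    intro T hT
    have := card_le_card (mem_powerset.mp hT)
    rw [show n - #T = (n - #S) + (#S - #T) by omega, pow_add]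
    ring
  rw [sum_erase_eq_sub (empty_mem_powerset S), sum_congr rfl hfactor, ← mul_sum,
    sum_pow_mul_eq_add_pow, add_sub_cancel, one_pow, mul_one, card_empty, pow_zero, one_mul,
    Nat.sub_zero]

section PowInequalities

variable {R : Type*} [CommRing R] [LinearOrder R] [IsStrictOrderedRing R] {q : R}

theorem pow_add_pow_le_one_add_pow_add (h0 : 0 ≤ q) (h1 : q ≤ 1) (x y : ℕ) :
    q ^ x + q ^ y ≤ 1 + q ^ (x + y) := by
  have := mul_nonneg (sub_nonneg.2 (pow_le_one₀ h0 h1 : q ^ x ≤ 1))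
    (sub_nonneg.2 (pow_le_one₀ h0 h1 : q ^ y ≤ 1))
  rw [pow_add]
  linarith

theorem pow_add_pow_lt_self_add_pow (h0 : 0 < q) (h1 : q < 1) {a : ℕ} (b : ℕ) {c : ℕ}
    (ha : 1 ≤ a) (hc : 1 ≤ c) :
    q ^ (a + b) + q ^ (a + c) < q + q ^ (a + b + c - 1) := by
  obtain ⟨a, rfl⟩ := Nat.exists_eq_add_of_le' ha
  obtain ⟨c, rfl⟩ := Nat.exists_eq_add_of_le' hc
  calc q ^ (a + 1 + b) + q ^ (a + 1 + (c + 1))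
      < q ^ (b + 1) + q ^ (a + c + 1) :=
        add_lt_add_of_le_of_lt (pow_le_pow_of_le_one h0.le h1.le (by omega))
          (pow_lt_pow_right_of_lt_one₀ h0 h1 (by omega))
    _ = q * (q ^ b + q ^ (a + c)) := by ring
    _ ≤ q * (1 + q ^ (b + (a + c))) :=
        mul_le_mul_of_nonneg_left (pow_add_pow_le_one_add_pow_add h0.le h1.le _ _) h0.le
    _ = q + q ^ (a + 1 + b + (c + 1) - 1) := by
        rw [show a + 1 + b + (c + 1) - 1 = b + (a + c) + 1 by omega]
        ring

end PowInequalities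

namespace Multigraph

variable (G : Multigraph)

def edgesBetween (u w : G.V) : Finset G.E := {e | G.ends e = s(u, w)}

variable {G}

@[simp]
theorem mem_edgesBetween {e : G.E} {u w : G.V} :
    e ∈ G.edgesBetween u w ↔ G.ends e = s(u, w) := by
  simp [edgesBetween]

theorem subgraph_adj_of_mem {E' : Finset G.E} {e : G.E} (he : e ∈ E') {u w : G.V}
    (hends : G.ends e = s(u, w)) : (G.subgraph E').Adj u w :=
  ⟨fun huw => G.loopless e (by rw [hends, huw]; exact Sym2.mk_isDiag_iff.mpr rfl), e, he, hends⟩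

section ThreeVertices

variable {s t v : G.V}

theorem not_reachable_and_reachable_iff_of_three_vertices (hV : ∀ x, x = s ∨ x = t ∨ x = v)
    (hst : s ≠ t) (hvs : v ≠ s) (hvt : v ≠ t) {E' : Finset G.E} :
    ¬ (G.subgraph E').Reachable s t ∧ (G.subgraph E').Reachable v s ↔
      E'.Nonempty ∧ E' ⊆ G.edgesBetween s v := by
  constructor
  · rintro ⟨hst', hvs'⟩
    refine ⟨nonempty_iff_ne_empty.mpr ?_, fun e he => ?_⟩
    · rintro rfl
      exact hvs (SimpleGraph.IsIsolated.eq_of_reachable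
        (fun w h => by obtain ⟨-, e, he, -⟩ := h; simp at he) hvs')
    suffices ∀ z, G.ends e = z → z = s(s, v) by simpa using this _ rfl
    refine Sym2.ind fun x y hxy => ?_
    have hadj := subgraph_adj_of_mem he hxy
    -- An `s`–`t` or `t`–`v` edge would join `s` to `t`.
    rcases hV x with rfl | rfl | rfl <;> rcases hV y with rfl | rfl | rfl
    all_goals first
      | exact absurd rfl hadj.ne
      | exact Sym2.eq_swap
      | rfl
      | exact absurd hadj.reachable hst'
      | exact absurd hadj.symm.reachable hst'
      | exact absurd (hvs'.symm.trans hadj.reachable) hst'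
      | exact absurd (hvs'.symm.trans hadj.symm.reachable) hst'
  · rintro ⟨⟨e, he⟩, hsub⟩
    have hends : ∀ e ∈ E', G.ends e = s(s, v) := fun e he => mem_edgesBetween.mp (hsub he)
    have ht : (G.subgraph E').IsIsolated t := by
      rintro w ⟨-, e, he, hends'⟩
      rw [hends e he, Sym2.eq_iff] at hends'
      grind
    exact ⟨fun h => hst (ht.eq_of_reachable h.symm).symm,
      (subgraph_adj_of_mem he (hends e he)).symm.reachable⟩

theorem splitState_iff_of_three_vertices (hV : ∀ x, x = s ∨ x = t ∨ x = v) (hst : s ≠ t)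
    (hvs : v ≠ s) (hvt : v ≠ t) {E' : Finset G.E} :
    G.SplitState s t E' ↔
      E'.Nonempty ∧ E' ⊆ G.edgesBetween s v ∨ E'.Nonempty ∧ E' ⊆ G.edgesBetween t v := by
  have hV' : ∀ x, x = t ∨ x = s ∨ x = v := fun x => by have := hV x; tauto
  rw [← not_reachable_and_reachable_iff_of_three_vertices hV hst hvs hvt,
    ← not_reachable_and_reachable_iff_of_three_vertices hV' hst.symm hvt hvs,
    SimpleGraph.reachable_comm (u := t), ← and_or_left, SplitState]
  refine and_congr_right fun _ => ⟨fun h => h v, fun h x => ?_⟩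
  rcases hV x with rfl | rfl | rfl
  · exact .inl .rfl
  · exact .inr .rfl
  · exact h

theorem sRel_eq_of_three_vertices (hV : ∀ x, x = s ∨ x = t ∨ x = v) (hst : s ≠ t)
    (hvs : v ≠ s) (hvt : v ≠ t) (p : ℝ) :
    G.sRel s t p =
      ((1 - p) ^ (Fintype.card G.E - #(G.edgesBetween s v)) - (1 - p) ^ Fintype.card G.E) +
      ((1 - p) ^ (Fintype.card G.E - #(G.edgesBetween t v)) - (1 - p) ^ Fintype.card G.E) := by
  classical
  have hsplit : ({E' | G.SplitState s t E'} : Finset (Finset G.E)) =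
      (G.edgesBetween s v).powerset.erase ∅ ∪ (G.edgesBetween t v).powerset.erase ∅ := by
    ext E'
    simp [splitState_iff_of_three_vertices hV hst hvs hvt, nonempty_iff_ne_empty]
  have hdisj : Disjoint ((G.edgesBetween s v).powerset.erase ∅)
      ((G.edgesBetween t v).powerset.erase ∅) := by
    refine disjoint_left.mpr fun E' h₁ h₂ => ?_
    simp only [mem_erase, mem_powerset, ← nonempty_iff_ne_empty] at h₁ h₂
    obtain ⟨e, he⟩ := h₁.1
    have hends := (mem_edgesBetween.mp (h₁.2 he)).symm.trans (mem_edgesBetween.mp (h₂.2 he))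
    rw [Sym2.eq_iff] at hends
    grind
  rw [sRel, ← sum_filter, hsplit, sum_union hdisj,
    sum_powerset_erase_empty_pow_mul_one_sub_pow _ (card_le_univ _),
    sum_powerset_erase_empty_pow_mul_one_sub_pow _ (card_le_univ _)]

end ThreeVertices

theorem tripleBundle_edgesBetween_zero_two (a b c : ℕ) :
    (tripleBundle a b c).edgesBetween (0 : Fin 3) (2 : Fin 3) =
      ({e | a + b ≤ e.val ∧ e.val < a + b + c} : Finset (Fin (a + b + c))) := by
  ext e
  have := e.isLt
  refine mem_edgesBetween.trans (Iff.trans ?_ (mem_filter_univ e).symm)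
  simp only [tripleBundle]
  split_ifs <;> simp <;> omega

theorem tripleBundle_edgesBetween_one_two (a b c : ℕ) :
    (tripleBundle a b c).edgesBetween (1 : Fin 3) (2 : Fin 3) =
      ({e | a ≤ e.val ∧ e.val < a + b} : Finset (Fin (a + b + c))) := by
  ext e
  refine mem_edgesBetween.trans (Iff.trans ?_ (mem_filter_univ e).symm)
  simp only [tripleBundle]
  split_ifs <;> simp <;> omega

theorem tripleBundle_sRel (a b c : ℕ) (p : ℝ) :
    (tripleBundle a b c).sRel (0 : Fin 3) (1 : Fin 3) p =
      (1 - p) ^ (a + b) + (1 - p) ^ (a + c) - 2 * (1 - p) ^ (a + b + c) := by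
  erw [sRel_eq_of_three_vertices (G := tripleBundle a b c) (v := (2 : Fin 3))
    (by decide : ∀ x : Fin 3, x = 0 ∨ x = 1 ∨ x = 2) (by decide : (0 : Fin 3) ≠ 1)
    (by decide : (2 : Fin 3) ≠ 0) (by decide : (2 : Fin 3) ≠ 1),
    tripleBundle_edgesBetween_zero_two, tripleBundle_edgesBetween_one_two,
    Fin.card_filter_le_val_lt le_rfl, Fin.card_filter_le_val_lt (by omega)]
  have hE : Fintype.card (tripleBundle a b c).E = a + b + c := Fintype.card_fin _
  rw [hE, show a + b + c - (a + b + c - (a + b)) = a + b by omega,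
    show a + b + c - (a + b - a) = a + c by omega]
  ring

theorem Gnm_three_edgesBetween_zero_one (m : ℕ) :
    (Gnm 3 m 1 (by decide)).edgesBetween (0 : Fin 3) (1 : Fin 3) =
      ({e | 0 ≤ e.val ∧ e.val < 1} : Finset (Fin m)) := by
  ext e
  refine mem_edgesBetween.trans (Iff.trans ?_ (mem_filter_univ e).symm)
  simp only [Gnm]
  split_ifs <;> simp [Fin.ext_iff]; omega

theorem Gnm_three_edgesBetween_two_one (m : ℕ) :
    (Gnm 3 m 1 (by decide)).edgesBetween (2 : Fin 3) (1 : Fin 3) =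
      ({e | 1 ≤ e.val ∧ e.val < m} : Finset (Fin m)) := by
  ext e
  have := e.isLt
  refine mem_edgesBetween.trans (Iff.trans ?_ (mem_filter_univ e).symm)
  simp only [Gnm]
  split_ifs <;> simp [Fin.ext_iff] <;> omega

theorem Gnm_three_sRel {m : ℕ} (hm : 1 ≤ m) (p : ℝ) :
    (Gnm 3 m 1 (by decide)).sRel (⟨0, by decide⟩ : Fin 3) (⟨2, by decide⟩ : Fin 3) p =
      (1 - p) + (1 - p) ^ (m - 1) - 2 * (1 - p) ^ m := by
  erw [sRel_eq_of_three_vertices (G := Gnm 3 m 1 _) (v := (1 : Fin 3))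
    (by decide : ∀ x : Fin 3, x = 0 ∨ x = 2 ∨ x = 1) (by decide : (0 : Fin 3) ≠ 2)
    (by decide : (1 : Fin 3) ≠ 0) (by decide : (1 : Fin 3) ≠ 2),
    Gnm_three_edgesBetween_zero_one, Gnm_three_edgesBetween_two_one,
    Fin.card_filter_le_val_lt hm, Fin.card_filter_le_val_lt le_rfl]
  have hE : Fintype.card (Gnm 3 m 1 (by decide)).E = m := Fintype.card_fin _
  rw [hE, show m - (m - 1) = 1 by omega, Nat.sub_zero, pow_one]
  ring

end Multigraph

/-- For the triangle graph `D` on vertices `s, t, v` with bundles of `a`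
edges between `s,t`, `b` edges between `t,v`, and `m-a-b` edges between `v,s` (terminals
`s, t`): `sRel(D,s,t;p) = (1-p)^a[(1-p)^b + (1-p)^{m-a-b} - 2(1-p)^{m-a}]` for `p ∈ [0,1]`,
and for `p ∈ (0,1)` this is strictly less than
`(1-p) + (1-p)^{m-1} - 2(1-p)^m = sRel(G_{3,m},s,t;p)`. -/
theorem sRel_D_lt (m : ℕ) (a b : ℕ) (ha : 1 ≤ a)
    (hab : a + b ≤ m - 1) :
    (∀ p : ℝ, 0 ≤ p → p ≤ 1 →
      (Multigraph.tripleBundle a b (m - a - b)).sRel (0 : Fin 3) (1 : Fin 3) p =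
        (1 - p) ^ a *
          ((1 - p) ^ b + (1 - p) ^ (m - a - b) - 2 * (1 - p) ^ (m - a))) ∧
    (∀ p : ℝ, 0 < p → p < 1 →
      (Multigraph.tripleBundle a b (m - a - b)).sRel (0 : Fin 3) (1 : Fin 3) p <
        (1 - p) + (1 - p) ^ (m - 1) - 2 * (1 - p) ^ m ∧
      (1 - p) + (1 - p) ^ (m - 1) - 2 * (1 - p) ^ m =
        (Multigraph.Gnm 3 m 1 (by omega)).sRel
          (⟨0, by omega⟩ : Fin 3) (⟨2, by omega⟩ : Fin 3) p) := by
  obtain ⟨c, rfl⟩ : ∃ c, m = a + b + c := ⟨m - a - b, by omega⟩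
  rw [show a + b + c - a - b = c by omega, show a + b + c - a = b + c by omega]
  refine ⟨fun p _ _ => ?_, fun p hp0 hp1 => ⟨?_, (Multigraph.Gnm_three_sRel (by omega) p).symm⟩⟩
  · rw [Multigraph.tripleBundle_sRel]
    ring
  · have := pow_add_pow_lt_self_add_pow (sub_pos.2 hp1) (sub_lt_self 1 hp0) b ha
      (by omega : 1 ≤ c)
    rw [Multigraph.tripleBundle_sRel]
    linarith
end
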